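/- arXiv:2112.00099 — 3 statements merged into one kernel-verified Lean document; each statement's English description precedes it below -/
import Mathlib

section
/- Let E be a finite-dimensional real normed space and let X be a real Banach space. Then the space B(E, X**) of bounded linear operators from E into the bidual of X is isometrically isomorphic to the bidual B(E, X)** of the space of bounded linear operators from E to X; that is, there exists an isometric linear isomorphism between E →L X** and the double (topological) dual of E →L X. -/
/-!
For `e ∈ E` and `f ∈ X*` let `e ⊗ f ∈ B(E, X)*` be the functional `T ↦ f (T e)`, of norm at most
`‖e‖ ‖f‖`. Then `θ F := (e ↦ (f ↦ F (e ⊗ f)))` is a linear map `B(E, X)** → B(E, X**)` of norm at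
most one. It is onto: a basis of `E` writes every `S` as a finite sum of rank-one operators
`φ(·) ξ`, and `u ↦ ξ (x ↦ u (φ(·) x))` is a preimage of `φ(·) ξ`.

It is isometric because `B(E, X)*` carries the projective norm of `E ⊗ X*`. A finite `δ`-net `t`
of the unit ball of `E` embeds `B(E, X)` into `ℓ^∞(t, X)` with distortion at most `1 / (1 - δ)`.
By Hahn–Banach, every `u ∈ B(E, X)*` extends to `ℓ^∞(t, X)`, whose dual is `ℓ¹(t, X*)`, so
`u = ∑_{y ∈ t} y ⊗ g_y` with `(1 - δ) ∑ ‖y‖ ‖g_y‖ ≤ ‖u‖`. Hence `(1 - δ) |F u| ≤ ‖θ F‖ ‖u‖`;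
now let `δ → 0`.
-/

namespace NormedSpace

/-- The topological dual of a seminormed space `E` (as in the older Mathlib). -/
abbrev Dual (𝕜 : Type*) [NontriviallyNormedField 𝕜] (E : Type*) [SeminormedAddCommGroup E]
    [NormedSpace 𝕜 E] : Type _ := E →L[𝕜] 𝕜

noncomputable instance (𝕜 : Type*) [NontriviallyNormedField 𝕜] (E : Type*) [SeminormedAddCommGroup E]
    [NormedSpace 𝕜 E] : NormedSpace 𝕜 (Dual 𝕜 E) := inferInstance

noncomputable instance (𝕜 : Type*) [NontriviallyNormedField 𝕜] (E : Type*) [SeminormedAddCommGroup E]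
    [NormedSpace 𝕜 E] : SeminormedAddCommGroup (Dual 𝕜 E) := inferInstance

end NormedSpace

open NormedSpace
open ContinuousLinearMap Metric Filter Topology

theorem le_of_forall_one_sub_mul_le {a b : ℝ} (h : ∀ δ, 0 < δ → δ < 1 → (1 - δ) * a ≤ b) :
    a ≤ b := by
  have hlim : Tendsto (fun δ : ℝ => (1 - δ) * a) (𝓝[>] 0) (𝓝 a) := by
    have : Continuous (fun δ : ℝ => (1 - δ) * a) := by fun_prop
    simpa using (this.tendsto 0).mono_left nhdsWithin_le_nhds
  refine le_of_tendsto hlim ?_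
  filter_upwards [Ioo_mem_nhdsGT (zero_lt_one' ℝ)] with δ hδ using h δ hδ.1 hδ.2

namespace ContinuousLinearMap

theorem opNorm_le_of_net {𝕜 E F : Type*} [DenselyNormedField 𝕜] [NormedAddCommGroup E]
    [NormedSpace 𝕜 E] [SeminormedAddCommGroup F] [NormedSpace 𝕜 F] (T : E →L[𝕜] F)
    {t : Set E} {δ K : ℝ} (ht : ball (0 : E) 1 ⊆ ⋃ y ∈ t, ball y δ) (hT : ∀ y ∈ t, ‖T y‖ ≤ K) :
    ‖T‖ ≤ K + δ * ‖T‖ := by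
  refine le_of_forall_lt fun r hr => ?_
  obtain ⟨x, hx, hrx⟩ := T.exists_lt_apply_of_lt_opNorm hr
  obtain ⟨y, hy, hxy⟩ := Set.mem_iUnion₂.mp (ht (mem_ball_zero_iff.mpr hx))
  calc r < ‖T x‖ := hrx
    _ = ‖T y + T (x - y)‖ := by rw [← map_add, add_sub_cancel]
    _ ≤ ‖T y‖ + ‖T‖ * ‖x - y‖ := norm_add_le_of_le le_rfl (T.le_opNorm _)
    _ ≤ K + δ * ‖T‖ := by
      rw [mul_comm δ]
      gcongr
      exacts [hT y hy, (mem_ball_iff_norm.mp hxy).le]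

end ContinuousLinearMap

theorem exists_le_apply_of_lt_opNorm {X : Type*} [NormedAddCommGroup X]
    [NormedSpace ℝ X] (f : Dual ℝ X) {r : ℝ} (hr : r < ‖f‖) : ∃ x : X, ‖x‖ ≤ 1 ∧ r ≤ f x := by
  obtain ⟨x, hx, hrx⟩ := f.exists_lt_apply_of_lt_opNorm hr
  rcases le_or_gt 0 (f x) with hfx | hfx
  · exact ⟨x, hx.le, by rw [Real.norm_eq_abs, abs_of_nonneg hfx] at hrx; exact hrx.le⟩
  · refine ⟨-x, by rw [norm_neg]; exact hx.le, ?_⟩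
    rw [Real.norm_eq_abs, abs_of_neg hfx] at hrx
    rw [map_neg]; exact hrx.le

theorem sum_norm_comp_single_le {ι X : Type*} [Fintype ι] [DecidableEq ι]
    [NormedAddCommGroup X] [NormedSpace ℝ X] (g : Dual ℝ (ι → X)) :
    ∑ i, ‖g ∘L single ℝ (fun _ => X) i‖ ≤ ‖g‖ := by
  refine le_of_forall_pos_le_add fun ε hε => ?_
  set η := ε / (Fintype.card ι + 1)
  have hη : 0 < η := by positivity
  choose x hx1 hx using fun i => exists_le_apply_of_lt_opNorm
    (g ∘L single ℝ (fun _ => X) i) (sub_lt_self _ hη)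
  have hx_norm : ‖x‖ ≤ 1 := (pi_norm_le_iff_of_nonneg zero_le_one).mpr hx1
  calc ∑ i, ‖g ∘L single ℝ (fun _ => X) i‖
      ≤ ∑ i, ((g ∘L single ℝ (fun _ => X) i) (x i) + η) :=
        Finset.sum_le_sum fun i _ => by linarith [hx i]
    _ = g x + Fintype.card ι * η := by
        rw [Finset.sum_add_distrib, sum_comp_single, Finset.sum_const, Finset.card_univ,
          nsmul_eq_mul]
    _ ≤ ‖g‖ + ε := by
        gcongr
        · exact (le_abs_self _).trans (by simpa using g.le_opNorm_of_le hx_norm)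
        · calc Fintype.card ι * η ≤ (Fintype.card ι + 1) * η := by gcongr; linarith
            _ = ε := by simp only [η]; field_simp

theorem exists_dual_comp_eq_of_le_norm {𝕜 B Y : Type*} [NontriviallyNormedField 𝕜]
    [IsRCLikeNormedField 𝕜] [NormedAddCommGroup B] [NormedSpace 𝕜 B] [SeminormedAddCommGroup Y]
    [NormedSpace 𝕜 Y] (A : B →L[𝕜] Y) {c : ℝ} (hc : 0 < c) (hA : ∀ T, c * ‖T‖ ≤ ‖A T‖)
    (u : Dual 𝕜 B) : ∃ g : Dual 𝕜 Y, g ∘L A = u ∧ c * ‖g‖ ≤ ‖u‖ := by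
  have hinj : Function.Injective A := by
    refine (injective_iff_map_eq_zero A).mpr fun T hT => norm_le_zero_iff.mp ?_
    have := hA T
    rw [hT, norm_zero] at this
    nlinarith [norm_nonneg T]
  let e := LinearEquiv.ofInjective (A : B →ₗ[𝕜] Y) hinj
  have he : ∀ w, A (e.symm w) = w := fun w => congrArg Subtype.val (e.apply_symm_apply w)
  have hbound : ∀ w, ‖u (e.symm w)‖ ≤ (c⁻¹ * ‖u‖) * ‖w‖ := fun w => by
    calc ‖u (e.symm w)‖ ≤ ‖u‖ * ‖e.symm w‖ := u.le_opNorm _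
      _ ≤ ‖u‖ * (c⁻¹ * ‖w‖) := by
        gcongr
        rw [le_inv_mul_iff₀ hc]
        exact (hA _).trans_eq (by rw [he]; rfl)
      _ = (c⁻¹ * ‖u‖) * ‖w‖ := by ring
  obtain ⟨g, hg, hgn⟩ :=
    exists_extension_norm_eq _ ((u.toLinearMap ∘ₗ e.symm.toLinearMap).mkContinuous _ hbound)
  refine ⟨g, ext fun T => ?_, ?_⟩
  · simpa [e] using hg (e T)
  · rw [hgn, ← le_inv_mul_iff₀ hc]
    exact LinearMap.mkContinuous_norm_le _ (by positivity) _

noncomputable section Pairing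

variable {𝕜 E X : Type*} [NontriviallyNormedField 𝕜] [SeminormedAddCommGroup E] [NormedSpace 𝕜 E]
  [SeminormedAddCommGroup X] [NormedSpace 𝕜 X]

variable (𝕜 E X) in
def evalFunctionalL : E →L[𝕜] Dual 𝕜 X →L[𝕜] Dual 𝕜 (E →L[𝕜] X) :=
  (compL 𝕜 (E →L[𝕜] X) X 𝕜).flip ∘L apply 𝕜 X

@[simp]
theorem evalFunctionalL_apply (e : E) (f : Dual 𝕜 X) (T : E →L[𝕜] X) :
    evalFunctionalL 𝕜 E X e f T = f (T e) :=
  rfl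

theorem norm_evalFunctionalL_apply_le (e : E) (f : Dual 𝕜 X) :
    ‖evalFunctionalL 𝕜 E X e f‖ ≤ ‖e‖ * ‖f‖ :=
  opNorm_le_bound _ (by positivity) fun T => by
    calc ‖f (T e)‖ ≤ ‖f‖ * (‖T‖ * ‖e‖) := f.le_opNorm_of_le (T.le_opNorm e)
      _ = ‖e‖ * ‖f‖ * ‖T‖ := by ring

def toOpBidual : Dual 𝕜 (Dual 𝕜 (E →L[𝕜] X)) →L[𝕜] E →L[𝕜] Dual 𝕜 (Dual 𝕜 X) :=
  (compL 𝕜 E (Dual 𝕜 X →L[𝕜] Dual 𝕜 (E →L[𝕜] X)) (Dual 𝕜 X →L[𝕜] 𝕜)).flip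
    (evalFunctionalL 𝕜 E X) ∘L compL 𝕜 (Dual 𝕜 X) (Dual 𝕜 (E →L[𝕜] X)) 𝕜

@[simp]
theorem toOpBidual_apply (F : Dual 𝕜 (Dual 𝕜 (E →L[𝕜] X))) (e : E) (f : Dual 𝕜 X) :
    toOpBidual F e f = F (evalFunctionalL 𝕜 E X e f) :=
  rfl

theorem norm_toOpBidual_le (F : Dual 𝕜 (Dual 𝕜 (E →L[𝕜] X))) : ‖toOpBidual F‖ ≤ ‖F‖ :=
  opNorm_le_bound₂ _ (norm_nonneg F) fun e f => by
    calc ‖F (evalFunctionalL 𝕜 E X e f)‖ ≤ ‖F‖ * (‖e‖ * ‖f‖) :=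
          F.le_opNorm_of_le (norm_evalFunctionalL_apply_le e f)
      _ = ‖F‖ * ‖e‖ * ‖f‖ := by ring

theorem toOpBidual_comp_smulRight (φ : Dual 𝕜 E) (ξ : Dual 𝕜 (Dual 𝕜 X)) :
    toOpBidual (ξ ∘L (compL 𝕜 X (E →L[𝕜] X) 𝕜).flip (smulRightL 𝕜 E X φ)) = φ.smulRight ξ := by
  ext e f
  have : (evalFunctionalL 𝕜 E X e f) ∘L smulRightL 𝕜 E X φ = φ e • f := by
    ext x
    simp
  simp [this]

end Pairing

theorem toOpBidual_surjective {𝕜 E X : Type*} [NontriviallyNormedField 𝕜] [CompleteSpace 𝕜]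
    [NormedAddCommGroup E] [NormedSpace 𝕜 E] [FiniteDimensional 𝕜 E] [SeminormedAddCommGroup X]
    [NormedSpace 𝕜 X] :
    Function.Surjective (toOpBidual : Dual 𝕜 (Dual 𝕜 (E →L[𝕜] X)) → _) := by
  intro S
  let b := Module.finBasis 𝕜 E
  let φ i : Dual 𝕜 E := LinearMap.toContinuousLinearMap (b.coord i)
  refine ⟨∑ i, S (b i) ∘L (compL 𝕜 X (E →L[𝕜] X) 𝕜).flip (smulRightL 𝕜 E X (φ i)), ?_⟩
  ext1 e
  simp only [map_sum, toOpBidual_comp_smulRight, sum_apply, smulRight_apply, φ,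
    LinearMap.coe_toContinuousLinearMap', Module.Basis.coord_apply]
  conv_rhs => rw [← b.sum_repr e]
  simp only [map_sum, map_smul]

section FiniteDimensional

variable {E X : Type*} [NormedAddCommGroup E] [NormedSpace ℝ E] [FiniteDimensional ℝ E]
  [NormedAddCommGroup X] [NormedSpace ℝ X]

theorem exists_sum_evalFunctionalL_eq (u : Dual ℝ (E →L[ℝ] X)) {δ : ℝ} (hδ : 0 < δ)
    (hδ1 : δ < 1) :
    ∃ (t : Finset E) (g : t → Dual ℝ X), u = ∑ y : t, evalFunctionalL ℝ E X y (g y) ∧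
      (1 - δ) * ∑ y : t, ‖(y : E)‖ * ‖g y‖ ≤ ‖u‖ := by
  classical
  obtain ⟨t, ht_ball, ht_fin, ht_net⟩ := finite_approx_of_totallyBounded
    ((isCompact_closedBall (0 : E) 1).totallyBounded.subset ball_subset_closedBall) δ hδ
  lift t to Finset E using ht_fin
  let A : (E →L[ℝ] X) →L[ℝ] (t → X) := pi fun y => apply ℝ X (y : E)
  have hA : ∀ T, (1 - δ) * ‖T‖ ≤ ‖A T‖ := fun T => by
    have := T.opNorm_le_of_net ht_net fun y hy => norm_le_pi_norm (A T) ⟨y, hy⟩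
    linarith
  obtain ⟨g, hgA, hg⟩ := exists_dual_comp_eq_of_le_norm A (sub_pos.mpr hδ1) hA u
  refine ⟨t, fun y => g ∘L single ℝ (fun _ => X) y, ?_, ?_⟩
  · ext T
    rw [← hgA, comp_apply, ← sum_comp_single (L := g)]
    simp [A]
  · calc (1 - δ) * ∑ y : t, ‖(y : E)‖ * ‖g ∘L single ℝ (fun _ => X) y‖
        ≤ (1 - δ) * ∑ y : t, ‖g ∘L single ℝ (fun _ => X) y‖ := by
          refine mul_le_mul_of_nonneg_left (Finset.sum_le_sum fun y _ => ?_) (by linarith)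
          exact mul_le_of_le_one_left (norm_nonneg _) (mem_ball_zero_iff.mp (ht_ball y.2)).le
      _ ≤ (1 - δ) * ‖g‖ :=
          mul_le_mul_of_nonneg_left (sum_norm_comp_single_le g) (by linarith)
      _ ≤ ‖u‖ := hg

theorem norm_toOpBidual (F : Dual ℝ (Dual ℝ (E →L[ℝ] X))) : ‖toOpBidual F‖ = ‖F‖ := by
  refine le_antisymm (norm_toOpBidual_le F) (opNorm_le_bound _ (norm_nonneg _) fun u => ?_)
  refine le_of_forall_one_sub_mul_le fun δ hδ hδ1 => ?_
  obtain ⟨t, g, rfl, hg⟩ := exists_sum_evalFunctionalL_eq u hδ hδ1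
  calc (1 - δ) * ‖F (∑ y : t, evalFunctionalL ℝ E X y (g y))‖
      = (1 - δ) * ‖∑ y : t, toOpBidual F y (g y)‖ := by rw [map_sum]; rfl
    _ ≤ (1 - δ) * ∑ y : t, ‖toOpBidual F‖ * ‖(y : E)‖ * ‖g y‖ := by
        gcongr
        exact (norm_sum_le _ _).trans (Finset.sum_le_sum fun y _ => le_opNorm₂ _ _ _)
    _ = ‖toOpBidual F‖ * ((1 - δ) * ∑ y : t, ‖(y : E)‖ * ‖g y‖) := by
        simp only [Finset.mul_sum, mul_assoc, mul_left_comm]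
    _ ≤ ‖toOpBidual F‖ * ‖∑ y : t, evalFunctionalL ℝ E X y (g y)‖ := by gcongr

theorem toOpBidual_injective :
    Function.Injective (toOpBidual : Dual ℝ (Dual ℝ (E →L[ℝ] X)) → _) :=
  (injective_iff_map_eq_zero _).mpr fun F hF => ext fun u => norm_le_zero_iff.mp <| by
    simpa [← norm_toOpBidual F, hF] using F.le_opNorm u

end FiniteDimensional

theorem dean_identity_general (E X : Type*)
    [NormedAddCommGroup E] [NormedSpace ℝ E] [FiniteDimensional ℝ E]
    [NormedAddCommGroup X] [NormedSpace ℝ X] :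
    Nonempty ((E →L[ℝ] Dual ℝ (Dual ℝ X)) ≃ₗᵢ[ℝ] Dual ℝ (Dual ℝ (E →L[ℝ] X))) :=
  ⟨LinearIsometryEquiv.symm
    { LinearEquiv.ofBijective (toOpBidual : Dual ℝ (Dual ℝ (E →L[ℝ] X)) →L[ℝ] _).toLinearMap
        ⟨toOpBidual_injective, toOpBidual_surjective⟩ with
      norm_map' := norm_toOpBidual }⟩

/-- **Dean identity.** For a finite-dimensional real normed space `E` and a real Banach
space `X`, the space `B(E, X**)` is isometrically isomorphic to `B(E, X)**`. -/
theorem dean_identity (E X : Type*)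
    [NormedAddCommGroup E] [NormedSpace ℝ E] [FiniteDimensional ℝ E]
    [NormedAddCommGroup X] [NormedSpace ℝ X] [CompleteSpace X] :
    Nonempty ((E →L[ℝ] Dual ℝ (Dual ℝ X)) ≃ₗᵢ[ℝ] Dual ℝ (Dual ℝ (E →L[ℝ] X))) :=
  dean_identity_general E X
end

section
/- Let E be a real normed space and X a real Banach space. Then B(E,X) is dense in B(E,X**) in the operator weak*-topology: for every bounded linear operator T : E → X**, every finite set A ⊆ E, every finite set B ⊆ X*, and every ε > 0, there exists a bounded linear operator S : E → X such that |f(S a) − (T a)(f)| < ε for all a ∈ A and all f ∈ B. -/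
/-!
For a finite-dimensional subspace `V` of `X*`, the evaluation map `X → V*` is onto: otherwise
its image would be annihilated by a nonzero element of `V** = V`, i.e. by a nonzero functional
vanishing on all of `X`. So every `T a ∈ X**`, restricted to `V = span B`, is evaluation at some
point of `X`. Lifting `T` in this way on the finite-dimensional space `span A` (which is
projective) and precomposing with a continuous projection of `E` onto `span A` gives `S`, which
even satisfies `f (S a) = T a f` exactly on `A × B`.
-/

theorem StrongDual.surjective_flip_coeLM_comp_subtype {𝕜 X : Type*} [NormedField 𝕜]
    [NormedAddCommGroup X] [NormedSpace 𝕜 X]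
    (V : Submodule 𝕜 (StrongDual 𝕜 X)) [FiniteDimensional 𝕜 V] :
    Function.Surjective (ContinuousLinearMap.coeLM 𝕜 ∘ₗ V.subtype).flip :=
  (LinearMap.flip_surjective_iff₁ (V₁ := V) (V₂ := X)).mpr <|
    ContinuousLinearMap.coe_injective.comp Subtype.val_injective

section

variable {𝕜 E X : Type*} [RCLike 𝕜] [NormedAddCommGroup E] [NormedSpace 𝕜 E]
  [NormedAddCommGroup X] [NormedSpace 𝕜 X]

theorem LinearMap.exists_continuousLinearMap_lift_on {W : Type*} [AddCommGroup W] [Module 𝕜 W]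
    {P : X →ₗ[𝕜] W} (hP : Function.Surjective P) (R : E →ₗ[𝕜] W)
    (V : Submodule 𝕜 E) [FiniteDimensional 𝕜 V] :
    ∃ S : E →L[𝕜] X, ∀ v ∈ V, P (S v) = R v := by
  obtain ⟨h, hPh⟩ := Module.projective_lifting_property P (R ∘ₗ V.subtype) hP
  obtain ⟨π, hπ⟩ := Submodule.ClosedComplemented.of_finiteDimensional V
  refine ⟨(LinearMap.toContinuousLinearMap h).comp π, fun v hv => ?_⟩
  simpa [hπ ⟨v, hv⟩] using LinearMap.congr_fun hPh ⟨v, hv⟩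

theorem exists_continuousLinearMap_apply_eq_bidual_on_span
    (T : E →L[𝕜] StrongDual 𝕜 (StrongDual 𝕜 X)) (A : Finset E) (B : Finset (StrongDual 𝕜 X)) :
    ∃ S : E →L[𝕜] X, ∀ a ∈ Submodule.span 𝕜 (A : Set E),
      ∀ f ∈ Submodule.span 𝕜 (B : Set (StrongDual 𝕜 X)), f (S a) = T a f := by
  set V := Submodule.span 𝕜 (B : Set (StrongDual 𝕜 X))
  obtain ⟨S, hS⟩ := LinearMap.exists_continuousLinearMap_lift_on
    (StrongDual.surjective_flip_coeLM_comp_subtype V)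
    (V.subtype.dualMap ∘ₗ ContinuousLinearMap.coeLM 𝕜 ∘ₗ T.toLinearMap) (Submodule.span 𝕜 A)
  exact ⟨S, fun a ha f hf => LinearMap.congr_fun (hS a ha) ⟨f, hf⟩⟩

end

theorem operator_weakStar_dense_general (E X : Type*)
    [NormedAddCommGroup E] [NormedSpace ℝ E]
    [NormedAddCommGroup X] [NormedSpace ℝ X]
    (T : E →L[ℝ] StrongDual ℝ (StrongDual ℝ X))
    (A : Finset E) (B : Finset (StrongDual ℝ X)) (ε : ℝ) (hε : 0 < ε) :
    ∃ S : E →L[ℝ] X, ∀ a ∈ A, ∀ f ∈ B, |f (S a) - T a f| < ε := by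
  obtain ⟨S, hS⟩ := exists_continuousLinearMap_apply_eq_bidual_on_span T A B
  refine ⟨S, fun a ha f hf => ?_⟩
  rw [hS a (Submodule.subset_span ha) f (Submodule.subset_span hf), sub_self, abs_zero]
  exact hε

/-- Generalized Goldstine theorem: `B(E,X)` is dense in `B(E,X**)` in the operator
weak*-topology. -/
theorem operator_weakStar_dense (E X : Type*)
    [NormedAddCommGroup E] [NormedSpace ℝ E]
    [NormedAddCommGroup X] [NormedSpace ℝ X] [CompleteSpace X]
    (T : E →L[ℝ] StrongDual ℝ (StrongDual ℝ X))
    (A : Finset E) (B : Finset (StrongDual ℝ X)) (ε : ℝ) (hε : 0 < ε) :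
    ∃ S : E →L[ℝ] X, ∀ a ∈ A, ∀ f ∈ B, |f (S a) - T a f| < ε :=
  operator_weakStar_dense_general E X T A B ε hε
end

section
/- Let E and X be real Banach spaces. The relation ≼ on finite-rank bounded linear operators from E to X is transitive: if T ≼ S and S ≼ U for finite-rank bounded operators T, S, U : E → X, then T ≼ U. -/
/-!
`T ≼ S` says exactly that `ker T` and `ker S` have complements `A ≤ C` with `C`
finite-dimensional, and this holds iff both kernels have finite codimension and
`codim ker T ≤ codim ker S`; transitivity is then that of `≤`. For the converse, given
`codim P ≤ codim Q`, a complement of `P` meeting `Q` trivially is grown one vector at a time and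
then enlarged to a complement `C` of `Q`; the vectors added there can be taken in `P ⊓ C`.
-/

/-- The order `T ≼ S` on finite-rank operators from the paper: there are `n ≤ m` and
linearly independent vectors `e₁, …, e_m` of `E` such that `span{e₁,…,eₙ}` is an
algebraic complement of `ker T`, `span{e₁,…,e_m}` is an algebraic complement of `ker S`,
and `T eᵢ = 0` for `n < i ≤ m`. -/
def OpOrder {E X : Type*} [NormedAddCommGroup E] [NormedSpace ℝ E]
    [NormedAddCommGroup X] [NormedSpace ℝ X] (T S : E →L[ℝ] X) : Prop :=
  ∃ (n m : ℕ) (hnm : n ≤ m) (e : Fin m → E),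
    LinearIndependent ℝ e ∧
    (Submodule.span ℝ (Set.range fun i : Fin n => e (Fin.castLE hnm i)) ⊓
        LinearMap.ker (T : E →ₗ[ℝ] X) = ⊥) ∧
    (Submodule.span ℝ (Set.range fun i : Fin n => e (Fin.castLE hnm i)) ⊔
        LinearMap.ker (T : E →ₗ[ℝ] X) = ⊤) ∧
    (Submodule.span ℝ (Set.range e) ⊓ LinearMap.ker (S : E →ₗ[ℝ] X) = ⊥) ∧
    (Submodule.span ℝ (Set.range e) ⊔ LinearMap.ker (S : E →ₗ[ℝ] X) = ⊤) ∧
    ∀ i : Fin m, n ≤ (i : ℕ) → T (e i) = 0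

open Module Set

theorem Fin.range_append {α : Type*} {n k : ℕ} (a : Fin n → α) (d : Fin k → α) :
    range (Fin.append a d) = range a ∪ range d := by
  have h : Fin.append a d ∘ finSumFinEquiv = Sum.elim a d := Fin.append_comp_sumElim
  rw [← Sum.elim_range, ← h, EquivLike.range_comp]

namespace Submodule

section Ring

variable {R M : Type*} [Ring R] [AddCommGroup M] [Module R M]

theorem exists_notMem_of_ne_top {p q : Submodule R M} (hp : p ≠ ⊤) (hq : q ≠ ⊤) :
    ∃ x, x ∉ p ∧ x ∉ q := by
  obtain ⟨y, hyp⟩ := SetLike.exists_not_mem_of_ne_top p hp rfl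
  obtain ⟨z, hzq⟩ := SetLike.exists_not_mem_of_ne_top q hq rfl
  by_cases hyq : y ∈ q
  · by_cases hzp : z ∈ p
    · exact ⟨y + z, fun h => hyp ((p.add_mem_iff_left hzp).1 h),
        fun h => hzq ((q.add_mem_iff_right hyq).1 h)⟩
    · exact ⟨z, hzp, hzq⟩
  · exact ⟨y, hyp, hyq⟩

theorem injective_mkQ_comp_subtype {A P : Submodule R M} (h : Disjoint A P) :
    Function.Injective (P.mkQ ∘ₗ A.subtype) := by
  rw [← LinearMap.ker_eq_bot, LinearMap.ker_comp, ker_mkQ, ← disjoint_iff_comap_eq_bot]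
  exact h

end Ring

variable {K V : Type*} [DivisionRing K] [AddCommGroup V] [Module K V]

theorem _root_.LinearIndependent.fin_append {n k : ℕ} {a : Fin n → V} {d : Fin k → V}
    (ha : LinearIndependent K a) (hd : LinearIndependent K d)
    (h : Disjoint (span K (range a)) (span K (range d))) :
    LinearIndependent K (Fin.append a d) := by
  rw [← linearIndependent_equiv finSumFinEquiv]
  exact Fin.append_comp_sumElim ▸ ha.sum_type hd h

theorem exists_linearIndependent_span_eq (A : Submodule K V) [FiniteDimensional K A] :
    ∃ (n : ℕ) (a : Fin n → V), LinearIndependent K a ∧ span K (range a) = A := by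
  let b := finBasis K A
  refine ⟨_, A.subtype ∘ b, b.linearIndependent.map' _ A.ker_subtype, ?_⟩
  rw [range_comp, span_image, b.span_eq, map_subtype_top]

theorem finiteDimensional_of_disjoint {A P : Submodule K V} [FiniteDimensional K (V ⧸ P)]
    (h : Disjoint A P) : FiniteDimensional K A :=
  Module.Finite.of_injective _ (injective_mkQ_comp_subtype h)

theorem finrank_add_finrank_quotient_sup {A P : Submodule K V} [FiniteDimensional K (V ⧸ P)]
    (h : Disjoint A P) : finrank K A + finrank K (V ⧸ (P ⊔ A)) = finrank K (V ⧸ P) := by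
  rw [← (P.quotientQuotientEquivQuotientSup A).finrank_eq,
    ← LinearMap.finrank_range_of_inj (injective_mkQ_comp_subtype h), LinearMap.range_comp,
    range_subtype, add_comm]
  exact finrank_quotient_add_finrank _

theorem disjoint_sup_span_singleton {A B : Submodule K V} {x : V} (h : Disjoint A B)
    (hx : x ∉ A ⊔ B) : Disjoint (A ⊔ K ∙ x) B := by
  have hx₀ : x ≠ 0 := fun h₀ => hx (h₀ ▸ zero_mem _)
  rw [sup_comm]
  exact h.disjoint_sup_left_of_disjoint_sup_right ((disjoint_span_singleton' hx₀).2 hx).symm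

/-- A subspace meeting neither `P` nor `Q` can be grown, one vector at a time, into a complement of
`P` still meeting `Q` trivially: as long as `A ⊔ P ≠ ⊤`, the codimension count also gives
`A ⊔ Q ≠ ⊤`, and a vector outside both `A ⊔ P` and `A ⊔ Q` can be added. -/
theorem exists_isCompl_disjoint_of_disjoint {P Q : Submodule K V} [FiniteDimensional K (V ⧸ P)]
    [FiniteDimensional K (V ⧸ Q)] (hPQ : finrank K (V ⧸ P) ≤ finrank K (V ⧸ Q))
    (A : Submodule K V) (hAP : Disjoint A P) (hAQ : Disjoint A Q) :
    ∃ A', IsCompl A' P ∧ Disjoint A' Q := by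
  by_cases hA : A ⊔ P = ⊤
  · exact ⟨A, ⟨hAP, codisjoint_iff.mpr hA⟩, hAQ⟩
  have hAP_lt : finrank K A < finrank K (V ⧸ P) := by
    have : 0 < finrank K (V ⧸ (P ⊔ A)) := by
      have := Quotient.nontrivial_iff.mpr (sup_comm A P ▸ hA)
      have := (P.quotientQuotientEquivQuotientSup A).finiteDimensional
      exact finrank_pos
    have := finrank_add_finrank_quotient_sup hAP
    omega
  have hAQ_ne : A ⊔ Q ≠ ⊤ := by
    intro hAQ_top
    have := finrank_add_finrank_quotient_sup hAQ
    rw [sup_comm, hAQ_top, finrank_eq_zero_of_subsingleton K (V ⧸ (⊤ : Submodule K V))] at this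
    omega
  obtain ⟨x, hxP, hxQ⟩ := exists_notMem_of_ne_top hA hAQ_ne
  have hAxP := disjoint_sup_span_singleton hAP hxP
  have : FiniteDimensional K ↥(A ⊔ K ∙ x) := finiteDimensional_of_disjoint hAxP
  have : finrank K A < finrank K ↥(A ⊔ K ∙ x) :=
    finrank_lt_finrank_of_lt (left_lt_sup.2 fun hxA => hxP (mem_sup_left (span_le.1 hxA rfl)))
  exact exists_isCompl_disjoint_of_disjoint hPQ _ hAxP (disjoint_sup_span_singleton hAQ hxQ)
termination_by finrank K (V ⧸ P) - finrank K A

def HasNestedCompl (P Q : Submodule K V) : Prop :=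
  ∃ A C : Submodule K V, FiniteDimensional K C ∧ A ≤ C ∧ IsCompl A P ∧ IsCompl C Q

theorem hasNestedCompl_iff {P Q : Submodule K V} :
    HasNestedCompl P Q ↔ FiniteDimensional K (V ⧸ P) ∧ FiniteDimensional K (V ⧸ Q) ∧
      finrank K (V ⧸ P) ≤ finrank K (V ⧸ Q) := by
  constructor
  · rintro ⟨A, C, hC, hAC, hA, hCQ⟩
    have : FiniteDimensional K A := finiteDimensional_of_le hAC
    let eA := quotientEquivOfIsCompl P A hA.symm
    let eC := quotientEquivOfIsCompl Q C hCQ.symm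
    exact ⟨eA.symm.finiteDimensional, eC.symm.finiteDimensional,
      eA.finrank_eq ▸ eC.finrank_eq ▸ finrank_mono hAC⟩
  · rintro ⟨_, _, hPQ⟩
    obtain ⟨A, hA, hAQ⟩ :=
      exists_isCompl_disjoint_of_disjoint hPQ ⊥ disjoint_bot_left disjoint_bot_left
    obtain ⟨C, hAC, hC⟩ := hAQ.exists_isCompl
    exact ⟨A, C, (quotientEquivOfIsCompl Q C hC.symm).finiteDimensional, hAC, hA, hC⟩

theorem HasNestedCompl.trans {P Q R : Submodule K V} (hPQ : HasNestedCompl P Q)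
    (hQR : HasNestedCompl Q R) : HasNestedCompl P R := by
  obtain ⟨hP, -, hPQ⟩ := hasNestedCompl_iff.1 hPQ
  obtain ⟨-, hR, hQR⟩ := hasNestedCompl_iff.1 hQR
  exact hasNestedCompl_iff.2 ⟨hP, hR, hPQ.trans hQR⟩

/-- Since `A ⊔ P = ⊤`, modularity gives `C = A ⊔ (P ⊓ C)`: a basis of `A` followed by a basis of
`P ⊓ C` is a basis of `C`. -/
theorem exists_fin_append_of_le {A C P : Submodule K V} [FiniteDimensional K C] (hAC : A ≤ C)
    (hA : IsCompl A P) :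
    ∃ (n k : ℕ) (a : Fin n → V) (d : Fin k → V), LinearIndependent K (Fin.append a d) ∧
      span K (range a) = A ∧ span K (range (Fin.append a d)) = C ∧ ∀ j, d j ∈ P := by
  have : FiniteDimensional K A := finiteDimensional_of_le hAC
  obtain ⟨n, a, ha, rfl⟩ := exists_linearIndependent_span_eq A
  obtain ⟨k, d, hd, hdP⟩ := exists_linearIndependent_span_eq (P ⊓ C)
  refine ⟨n, k, a, d, ha.fin_append hd (hdP ▸ hA.disjoint.mono_right inf_le_left), rfl, ?_,
    fun j => (hdP ▸ subset_span (mem_range_self j) : d j ∈ P ⊓ C).1⟩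
  rw [Fin.range_append, span_union, hdP, ← sup_inf_assoc_of_le P hAC, hA.sup_eq_top, top_inf_eq]

end Submodule

open Submodule

section OpOrder

variable {E X : Type*} [NormedAddCommGroup E] [NormedSpace ℝ E] [NormedAddCommGroup X]
  [NormedSpace ℝ X]

theorem opOrder_iff_hasNestedCompl {T S : E →L[ℝ] X} :
    OpOrder T S ↔
      HasNestedCompl (LinearMap.ker (T : E →ₗ[ℝ] X)) (LinearMap.ker (S : E →ₗ[ℝ] X)) := by
  constructor
  · rintro ⟨n, m, _, e, -, hA₁, hA₂, hC₁, hC₂, -⟩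
    exact ⟨_, _, FiniteDimensional.span_of_finite ℝ (finite_range e),
      span_mono (range_comp_subset_range _ _), .of_eq hA₁ hA₂, .of_eq hC₁ hC₂⟩
  · rintro ⟨A, C, hC, hAC, hA, hCS⟩
    obtain ⟨n, k, a, d, he, rfl, rfl, hdT⟩ := exists_fin_append_of_le hAC hA
    have hfirst : (fun i : Fin n => Fin.append a d (Fin.castLE (n.le_add_right k) i)) = a :=
      funext (Fin.append_left a d)
    refine ⟨n, n + k, n.le_add_right k, Fin.append a d, he, ?_, ?_, hCS.inf_eq_bot,
      hCS.sup_eq_top, fun i hi => ?_⟩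
    · rw [hfirst, hA.inf_eq_bot]
    · rw [hfirst, hA.sup_eq_top]
    · induction i using Fin.addCases with
      | left j => exact absurd hi (by simp)
      | right j => simpa using hdT j

end OpOrder

theorem opOrder_trans_general (E X : Type*)
    [NormedAddCommGroup E] [NormedSpace ℝ E]
    [NormedAddCommGroup X] [NormedSpace ℝ X]
    (T S U : E →L[ℝ] X)
    (hTS : OpOrder T S) (hSU : OpOrder S U) : OpOrder T U :=
  opOrder_iff_hasNestedCompl.2 <|
    (opOrder_iff_hasNestedCompl.1 hTS).trans (opOrder_iff_hasNestedCompl.1 hSU)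

/-- The relation `≼` is transitive on finite-rank bounded operators. -/
theorem opOrder_trans (E X : Type*)
    [NormedAddCommGroup E] [NormedSpace ℝ E] [CompleteSpace E]
    [NormedAddCommGroup X] [NormedSpace ℝ X] [CompleteSpace X]
    (T S U : E →L[ℝ] X)
    (hT : FiniteDimensional ℝ (LinearMap.range (T : E →ₗ[ℝ] X)))
    (hS : FiniteDimensional ℝ (LinearMap.range (S : E →ₗ[ℝ] X)))
    (hU : FiniteDimensional ℝ (LinearMap.range (U : E →ₗ[ℝ] X)))
    (hTS : OpOrder T S) (hSU : OpOrder S U) : OpOrder T U :=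
  opOrder_trans_general E X T S U hTS hSU
end
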